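/- Let f : B → A be a faithfully flat homomorphism of commutative rings. The functor sending a B-module N to the descent datum (A ⊗[B] N, θ_N), where θ_N : (A ⊗[B] N) ⊗[B] A → A ⊗[B] (A ⊗[B] N) is the isomorphism determined by (a ⊗ n) ⊗ a' ↦ a ⊗ (a' ⊗ n), and sending a B-linear map g to id_A ⊗ g, is an equivalence from ModuleCat B to the category of descent data for f. -/

import Mathlib

open CategoryTheory TensorProduct

namespace ModuleDescent

noncomputable section

universe u

variable {B A : Type u} [CommRing B] [CommRing A] (f : B →+* A)

/-- The `B`-module obtained from an `A`-module by restriction of scalars along `f`. -/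
abbrev res (M : ModuleCat.{u} A) : ModuleCat.{u} B := (ModuleCat.restrictScalars f).obj M

/-- `A` as a `B`-module via `f`. -/
abbrev resA : ModuleCat.{u} B := res f (ModuleCat.of A A)

/-- Scalar multiplication by `a : A` as a `B`-linear endomorphism of (the restriction of
scalars of) an `A`-module `M`. -/
def smulHom (M : ModuleCat.{u} A) (a : A) : ↥(res f M) →ₗ[B] ↥(res f M) where
  toFun m := (a • m : ↥M)
  map_add' := smul_add a
  map_smul' b m := by
    show a • (f b • m : ↥M) = f b • (a • m : ↥M)
    rw [← mul_smul, mul_comm, mul_smul]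

/-- The identity function from `A` (as a `B`-module via `f`) to `A`. -/
def toA (x : ↥(resA f)) : A := x

/-- Left multiplication by `a' : A` as a `B`-linear endomorphism of `A`. -/
def mulHom (a' : A) : ↥(resA f) →ₗ[B] ↥(resA f) where
  toFun x := (a' * toA f x : A)
  map_add' x y := by
    show (a' * (toA f x + toA f y) : A) = a' * toA f x + a' * toA f y
    ring
  map_smul' b x := by
    show (a' * (f b * toA f x) : A) = f b * (a' * toA f x)
    ring

/-- The action of the pure tensor `a ⊗ a'` of `A ⊗[B] A` on `M ⊗[B] A`:
`(a ⊗ a') • (m ⊗ x) = (a • m) ⊗ (a' * x)`. -/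
def actL (M : ModuleCat.{u} A) (a a' : A) :
    ↥(res f M) ⊗[B] ↥(resA f) →ₗ[B] ↥(res f M) ⊗[B] ↥(resA f) :=
  TensorProduct.map (smulHom f M a) (mulHom f a')

/-- The action of the pure tensor `a ⊗ a'` of `A ⊗[B] A` on `A ⊗[B] M`:
`(a ⊗ a') • (x ⊗ m) = (a * x) ⊗ (a' • m)`. -/
def actR (M : ModuleCat.{u} A) (a a' : A) :
    ↥(resA f) ⊗[B] ↥(res f M) →ₗ[B] ↥(resA f) ⊗[B] ↥(res f M) :=
  TensorProduct.map (mulHom f a) (smulHom f M a')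

/-- The map `α` swapping the two `A`-factors of `M ⊗[B] A ⊗[B] A`. -/
def swapMAA (M : ModuleCat.{u} A) :
    (↥(res f M) ⊗[B] ↥(resA f)) ⊗[B] ↥(resA f) →ₗ[B]
      (↥(res f M) ⊗[B] ↥(resA f)) ⊗[B] ↥(resA f) :=
  (TensorProduct.assoc B _ _ _).symm.toLinearMap ∘ₗ
    (TensorProduct.congr (LinearEquiv.refl B ↥(res f M))
      (TensorProduct.comm B ↥(resA f) ↥(resA f))).toLinearMap ∘ₗ
        (TensorProduct.assoc B _ _ _).toLinearMap

/-- The map `β` swapping the last two factors of `A ⊗[B] M ⊗[B] A`. -/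
def swapAMA (M : ModuleCat.{u} A) :
    (↥(resA f) ⊗[B] ↥(res f M)) ⊗[B] ↥(resA f) →ₗ[B]
      (↥(resA f) ⊗[B] ↥(resA f)) ⊗[B] ↥(res f M) :=
  (TensorProduct.assoc B _ _ _).symm.toLinearMap ∘ₗ
    (TensorProduct.congr (LinearEquiv.refl B ↥(resA f))
      (TensorProduct.comm B ↥(res f M) ↥(resA f))).toLinearMap ∘ₗ
        (TensorProduct.assoc B _ _ _).toLinearMap

/-- The `B`-bilinear evaluation `a ↦ (m ↦ a • m)`. -/
def ev (M : ModuleCat.{u} A) : ↥(resA f) →ₗ[B] (↥(res f M) →ₗ[B] ↥(res f M)) where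
  toFun a := smulHom f M (toA f a)
  map_add' a a' := LinearMap.ext fun m => by
    show (toA f a + toA f a') • m = toA f a • m + toA f a' • m
    rw [add_smul]
  map_smul' b a := LinearMap.ext fun m => by
    show (f b * toA f a) • m = f b • ((toA f a • m : ↥M))
    rw [mul_smul]

/-- The action map `A ⊗[B] M → M`, `a ⊗ m ↦ a • m`. -/
def unitMap (M : ModuleCat.{u} A) :
    ↥(resA f) ⊗[B] ↥(res f M) →ₗ[B] ↥(res f M) :=
  TensorProduct.lift (ev f M)

/-- A descent datum for the ring homomorphism `f : B →+* A`: an `A`-module `M` together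
with an additive map `θ : M ⊗[B] A → A ⊗[B] M` which is linear over `A ⊗[B] A`
(equivalently: additive, `B`-linear, and compatible with the action of the pure tensors
of `A ⊗[B] A`), satisfying the cocycle condition `(id_A ⊗ θ) ∘ (θ ⊗ id_A) = θ₁₃` and the
unit condition. -/
structure DescentDatum where
  M : ModuleCat.{u} A
  θ : ↥(res f M) ⊗[B] ↥(resA f) →ₗ[B] ↥(resA f) ⊗[B] ↥(res f M)
  compat : ∀ (a a' : A) (z : ↥(res f M) ⊗[B] ↥(resA f)),
    θ (actL f M a a' z) = actR f M a a' (θ z)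
  cocycle :
    (TensorProduct.assoc B ↥(resA f) ↥(resA f) ↥(res f M)).toLinearMap ∘ₗ
        (swapAMA f M ∘ₗ θ.rTensor ↥(resA f) ∘ₗ swapMAA f M) =
      θ.lTensor ↥(resA f) ∘ₗ
        (TensorProduct.assoc B ↥(resA f) ↥(res f M) ↥(resA f)).toLinearMap ∘ₗ
          θ.rTensor ↥(resA f)
  unit : ∀ m : ↥M,
    unitMap f M (θ ((m : ↥(res f M)) ⊗ₜ[B] ((1 : A) : ↥(resA f)))) = m

/-- Morphisms of descent data: an `A`-linear map `φ` such that
`(id_A ⊗ φ) ∘ θ = η ∘ (φ ⊗ id_A)`. -/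
instance : Category (DescentDatum f) where
  Hom D D' := { φ : D.M ⟶ D'.M //
    LinearMap.lTensor ↥(resA f) ((ModuleCat.restrictScalars f).map φ).hom ∘ₗ D.θ =
      D'.θ ∘ₗ LinearMap.rTensor ↥(resA f) ((ModuleCat.restrictScalars f).map φ).hom }
  id D := ⟨𝟙 D.M, by
    rw [CategoryTheory.Functor.map_id]
    show LinearMap.lTensor _ LinearMap.id ∘ₗ D.θ = D.θ ∘ₗ LinearMap.rTensor _ LinearMap.id
    rw [LinearMap.lTensor_id, LinearMap.rTensor_id, LinearMap.id_comp, LinearMap.comp_id]⟩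
  comp {D D' D''} φ ψ := ⟨φ.1 ≫ ψ.1, by
    rw [CategoryTheory.Functor.map_comp]
    show LinearMap.lTensor _ (((ModuleCat.restrictScalars f).map ψ.1).hom.comp
        ((ModuleCat.restrictScalars f).map φ.1).hom) ∘ₗ D.θ =
      D''.θ ∘ₗ LinearMap.rTensor _ (((ModuleCat.restrictScalars f).map ψ.1).hom.comp
        ((ModuleCat.restrictScalars f).map φ.1).hom)
    rw [LinearMap.lTensor_comp, LinearMap.rTensor_comp, LinearMap.comp_assoc, φ.2,
      ← LinearMap.comp_assoc, ψ.2, LinearMap.comp_assoc]⟩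
  id_comp φ := Subtype.ext (Category.id_comp φ.1)
  comp_id φ := Subtype.ext (Category.comp_id φ.1)
  assoc φ ψ χ := Subtype.ext (Category.assoc φ.1 ψ.1 χ.1)

/-- The identity map, viewed as a `B`-linear equivalence between the restriction of
scalars of `A ⊗[B] N` and the tensor product `A ⊗[B] N` itself. -/
def rsEquiv (N : ModuleCat.{u} B) :
    ↥(res f ((ModuleCat.extendScalars.{u} f).obj N)) ≃ₗ[B] ↥(resA f) ⊗[B] ↥N where
  toFun z := z
  invFun z := z
  left_inv _ := rfl
  right_inv _ := rfl
  map_add' _ _ := rfl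
  map_smul' b z := by
    show (f b • z : ↥((ModuleCat.extendScalars.{u} f).obj N)) = b • z
    induction z using TensorProduct.induction_on with
    | zero =>
      exact (show f b • (0 : ↥((ModuleCat.extendScalars.{u} f).obj N)) = 0 from smul_zero _).trans
        (show b • (0 : (↥(resA f) ⊗[B] ↥N)) = 0 from smul_zero _).symm
    | tmul s m => rfl
    | add x y hx hy =>
      exact (show f b • ((show ↥((ModuleCat.extendScalars.{u} f).obj N) from x) + (show ↥((ModuleCat.extendScalars.{u} f).obj N) from y)) = f b • (show ↥((ModuleCat.extendScalars.{u} f).obj N) from x) + f b • (show ↥((ModuleCat.extendScalars.{u} f).obj N) from y) from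
        smul_add _ _ _).trans ((congrArg₂ (fun p q : ↥((ModuleCat.extendScalars.{u} f).obj N) => p + q) hx hy).trans
          (show b • (x : (↥(resA f) ⊗[B] ↥N)) + b • (y : (↥(resA f) ⊗[B] ↥N)) = b • ((x : (↥(resA f) ⊗[B] ↥N)) + (y : (↥(resA f) ⊗[B] ↥N))) from
            (smul_add _ _ _).symm))

/-- The canonical descent isomorphism
`θ_N : (A ⊗[B] N) ⊗[B] A → A ⊗[B] (A ⊗[B] N)`, `(a ⊗ n) ⊗ a' ↦ a ⊗ (a' ⊗ n)`. -/
def thetaN (N : ModuleCat.{u} B) :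
    ↥(res f ((ModuleCat.extendScalars.{u} f).obj N)) ⊗[B] ↥(resA f) →ₗ[B]
      ↥(resA f) ⊗[B] ↥(res f ((ModuleCat.extendScalars.{u} f).obj N)) :=
  (TensorProduct.congr (LinearEquiv.refl B ↥(resA f)) (rsEquiv f N).symm).toLinearMap ∘ₗ
    ((TensorProduct.congr (LinearEquiv.refl B ↥(resA f))
        (TensorProduct.comm B ↥N ↥(resA f))).toLinearMap ∘ₗ
      (TensorProduct.assoc B ↥(resA f) ↥N ↥(resA f)).toLinearMap) ∘ₗ
    (TensorProduct.congr (rsEquiv f N) (LinearEquiv.refl B ↥(resA f))).toLinearMap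

/-- The identity function from `A` to `A` as a `B`-module via `f`. -/
def ofA (a : A) : ↥(resA f) := a

/-- The identity function from `A ⊗[B] N` to the restriction of scalars of the extension
of scalars of `N`. -/
def toX (N : ModuleCat.{u} B) (z : ↥(resA f) ⊗[B] ↥N) :
    ↥(res f ((ModuleCat.extendScalars.{u} f).obj N)) := z

/-- `θ_N` is indeed determined by `(a ⊗ n) ⊗ a' ↦ a ⊗ (a' ⊗ n)`. -/
theorem thetaN_tmul (N : ModuleCat.{u} B) (a a' : A) (n : ↥N) :
    thetaN f N (toX f N (ofA f a ⊗ₜ[B] n) ⊗ₜ[B] ofA f a') =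
      ofA f a ⊗ₜ[B] toX f N (ofA f a' ⊗ₜ[B] n) :=
  rfl

/-! ### Auxiliary constructions for the proof -/

/-- `m ↦ m ⊗ 1` as a `B`-linear map. -/
def tmulOne (M : ModuleCat.{u} A) : ↥(res f M) →ₗ[B] ↥(res f M) ⊗[B] ↥(resA f) where
  toFun m := m ⊗ₜ[B] ofA f 1
  map_add' x y := add_tmul x y _
  map_smul' b m := by rw [RingHom.id_apply, smul_tmul']

/-- `p ↦ 1 ⊗ p` as a `B`-linear map, for any `B`-module `P`. -/
def jmap (P : Type u) [AddCommGroup P] [Module B P] : P →ₗ[B] ↥(resA f) ⊗[B] P where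
  toFun p := ofA f 1 ⊗ₜ[B] p
  map_add' x y := tmul_add _ x y
  map_smul' b p := by
    show ofA f 1 ⊗ₜ[B] (b • p) = b • (ofA f 1 ⊗ₜ[B] p)
    rw [tmul_smul]

/-- Multiplication `A ⊗[B] A → A` as a `B`-linear map. -/
def mul2 : ↥(resA f) ⊗[B] ↥(resA f) →ₗ[B] ↥(resA f) :=
  unitMap f (ModuleCat.of A A)

@[simp] lemma mul2_tmul (a a' : A) :
    mul2 f (ofA f a ⊗ₜ[B] ofA f a') = ofA f (a * a') := rfl

/-- Contraction `A ⊗ (A ⊗ X) → A ⊗ X` multiplying the two first factors. -/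
def contr (X : Type u) [AddCommGroup X] [Module B X] :
    ↥(resA f) ⊗[B] (↥(resA f) ⊗[B] X) →ₗ[B] ↥(resA f) ⊗[B] X :=
  LinearMap.rTensor X (mul2 f) ∘ₗ (TensorProduct.assoc B _ _ X).symm.toLinearMap

@[simp] lemma contr_tmul (X : Type u) [AddCommGroup X] [Module B X]
    (a a' : A) (x : X) :
    contr f X (ofA f a ⊗ₜ[B] (ofA f a' ⊗ₜ[B] x)) = ofA f (a * a') ⊗ₜ[B] x := by
  simp [contr]

lemma contr_jmap (X : Type u) [AddCommGroup X] [Module B X]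
    (y : ↥(resA f) ⊗[B] X) :
    contr f X (LinearMap.lTensor ↥(resA f) (jmap f X) y) = y := by
  induction y using TensorProduct.induction_on with
  | zero => simp
  | tmul a x =>
      have : contr f X (ofA f (toA f a) ⊗ₜ[B] (ofA f 1 ⊗ₜ[B] x)) =
          ofA f (toA f a * 1) ⊗ₜ[B] x := contr_tmul f X (toA f a) 1 x
      rw [mul_one] at this
      exact this
  | add y z hy hz => simp only [map_add, hy, hz]

/-! ### The descent datum attached to a `B`-module -/

lemma smulHom_extend_tmul (N : ModuleCat.{u} B) (a a' : A) (n : ↥N) :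
    smulHom f ((ModuleCat.extendScalars.{u} f).obj N) a (toX f N (ofA f a' ⊗ₜ[B] n)) =
      toX f N (ofA f (a * a') ⊗ₜ[B] n) := rfl

/-- The canonical descent datum `(A ⊗[B] N, θ_N)` attached to a `B`-module `N`. -/
def Fobj (N : ModuleCat.{u} B) : DescentDatum f where
  M := (ModuleCat.extendScalars.{u} f).obj N
  θ := thetaN f N
  compat a a' z := by
    induction z using TensorProduct.induction_on with
    | zero => simp only [map_zero]
    | tmul w x =>
        induction w using TensorProduct.induction_on with
        | zero => erw [zero_tmul]; simp only [map_zero]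
        | tmul a₀ n => rfl
        | add w₁ w₂ h₁ h₂ =>
            erw [add_tmul (M := ↥(res f ((ModuleCat.extendScalars.{u} f).obj N))) w₁ w₂ x]
            simp only [map_add, h₁, h₂]
    | add z₁ z₂ h₁ h₂ =>
        simp only [map_add, h₁, h₂]
  cocycle := by
    apply LinearMap.ext
    intro z
    induction z using TensorProduct.induction_on with
    | zero => simp only [map_zero]
    | tmul w y =>
        induction w using TensorProduct.induction_on with
        | zero => simp only [map_zero, zero_tmul]
        | tmul v x =>
            induction v using TensorProduct.induction_on with
            | zero => erw [zero_tmul]; simp only [map_zero, zero_tmul]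
            | tmul a n => rfl
            | add v₁ v₂ h₁ h₂ =>
                simp only [LinearMap.comp_apply] at h₁ h₂ ⊢
                erw [add_tmul (M := ↥(res f ((ModuleCat.extendScalars.{u} f).obj N))) v₁ v₂ x, add_tmul]
                simp only [map_add, h₁, h₂]
        | add w₁ w₂ h₁ h₂ =>
            simp only [LinearMap.comp_apply] at h₁ h₂ ⊢
            rw [add_tmul]
            simp only [map_add, h₁, h₂]
    | add z₁ z₂ h₁ h₂ =>
        simp only [LinearMap.comp_apply] at h₁ h₂ ⊢
        simp only [map_add, h₁, h₂]
  unit m := by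
    induction m using TensorProduct.induction_on with
    | zero => erw [zero_tmul]; simp only [zero_tmul, map_zero]; rfl
    | tmul a n =>
        show unitMap f _
            (thetaN f N (toX f N (ofA f (toA f a) ⊗ₜ[B] n) ⊗ₜ[B] ofA f 1)) =
          toX f N (ofA f (toA f a) ⊗ₜ[B] n)
        rw [thetaN_tmul]
        show toX f N (ofA f (toA f a * 1) ⊗ₜ[B] n) = toX f N (ofA f (toA f a) ⊗ₜ[B] n)
        rw [mul_one]
    | add m₁ m₂ h₁ h₂ =>
        erw [add_tmul (M := ↥(res f ((ModuleCat.extendScalars.{u} f).obj N))) m₁ m₂]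
        simp only [map_add, h₁, h₂]; rfl

/-- The functorial action on morphisms. -/
def Fmap {N N' : ModuleCat.{u} B} (g : N ⟶ N') : Fobj f N ⟶ Fobj f N' :=
  ⟨(ModuleCat.extendScalars.{u} f).map g, by
    apply LinearMap.ext
    intro z
    induction z using TensorProduct.induction_on with
    | zero => simp only [map_zero]
    | tmul w x =>
        induction w using TensorProduct.induction_on with
        | zero => erw [zero_tmul]; simp only [map_zero, zero_tmul]
        | tmul a n => rfl
        | add w₁ w₂ h₁ h₂ =>
            simp only [LinearMap.comp_apply] at h₁ h₂ ⊢
            erw [add_tmul (M := ↥(res f (Fobj f N).M)) w₁ w₂ x]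
            simp only [map_add, h₁, h₂]
    | add z₁ z₂ h₁ h₂ =>
        simp only [LinearMap.comp_apply] at h₁ h₂ ⊢
        simp only [map_add, h₁, h₂]⟩

/-- The comparison functor from `B`-modules to descent data. -/
def F : ModuleCat.{u} B ⥤ DescentDatum f where
  obj := Fobj f
  map := Fmap f
  map_id N := Subtype.ext ((ModuleCat.extendScalars.{u} f).map_id N)
  map_comp g h := Subtype.ext ((ModuleCat.extendScalars.{u} f).map_comp g h)

/-! ### The Amitsur sequence -/

@[simp] lemma jmap_apply (P : Type u) [AddCommGroup P] [Module B P] (p : P) :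
    jmap f P p = ofA f 1 ⊗ₜ[B] p := rfl

section Amitsur

variable (P : Type u) [AddCommGroup P] [Module B P]

/-- The difference of the two Amitsur maps `A ⊗ P → A ⊗ A ⊗ P`. -/
def hAmitsur : ↥(resA f) ⊗[B] P →ₗ[B] ↥(resA f) ⊗[B] (↥(resA f) ⊗[B] P) :=
  LinearMap.lTensor ↥(resA f) (jmap f P) - jmap f (↥(resA f) ⊗[B] P)

lemma hAmitsur_comp_jmap : hAmitsur f P ∘ₗ jmap f P = 0 := by
  apply LinearMap.ext
  intro p
  simp [hAmitsur]

lemma contr_hAmitsur (y : ↥(resA f) ⊗[B] (↥(resA f) ⊗[B] P)) :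
    contr f (↥(resA f) ⊗[B] P) (LinearMap.lTensor ↥(resA f) (hAmitsur f P) y) =
      LinearMap.lTensor ↥(resA f) (jmap f P) (contr f P y) - y := by
  induction y using TensorProduct.induction_on with
  | zero => simp
  | tmul a z =>
      induction z using TensorProduct.induction_on with
      | zero => simp
      | tmul a' p =>
          have h1 : contr f (↥(resA f) ⊗[B] P)
              (ofA f (toA f a) ⊗ₜ[B] (ofA f (toA f a') ⊗ₜ[B] (ofA f 1 ⊗ₜ[B] p))) =
                ofA f (toA f a * toA f a') ⊗ₜ[B] (ofA f 1 ⊗ₜ[B] p) :=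
            contr_tmul f _ (toA f a) (toA f a') _
          have h2 : contr f (↥(resA f) ⊗[B] P)
              (ofA f (toA f a) ⊗ₜ[B] (ofA f 1 ⊗ₜ[B] (ofA f (toA f a') ⊗ₜ[B] p))) =
                ofA f (toA f a * 1) ⊗ₜ[B] (ofA f (toA f a') ⊗ₜ[B] p) :=
            contr_tmul f _ (toA f a) 1 _
          have h3 : contr f P (ofA f (toA f a) ⊗ₜ[B] (ofA f (toA f a') ⊗ₜ[B] p)) =
              ofA f (toA f a * toA f a') ⊗ₜ[B] p :=
            contr_tmul f _ (toA f a) (toA f a') _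
          show contr f _ (ofA f (toA f a) ⊗ₜ[B] (hAmitsur f P (ofA f (toA f a') ⊗ₜ[B] p)))
            = _
          have h4 : hAmitsur f P (ofA f (toA f a') ⊗ₜ[B] p) =
              ofA f (toA f a') ⊗ₜ[B] (ofA f 1 ⊗ₜ[B] p) -
                ofA f 1 ⊗ₜ[B] (ofA f (toA f a') ⊗ₜ[B] p) := by
            simp [hAmitsur]
          rw [h4, tmul_sub, map_sub, h1, h2, mul_one]
          have h3' : contr f P (a ⊗ₜ[B] (a' ⊗ₜ[B] p)) =
              ofA f (toA f a * toA f a') ⊗ₜ[B] p := h3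
          rw [h3', LinearMap.lTensor_tmul, jmap_apply]
          rfl
      | add z₁ z₂ h₁ h₂ =>
          rw [tmul_add]
          simp only [map_add, h₁, h₂]
          abel
  | add y₁ y₂ h₁ h₂ =>
      simp only [map_add, h₁, h₂]
      abel

theorem jmap_injective (hfl : Module.FaithfullyFlat B ↥(resA f)) :
    Function.Injective (jmap f P) := by
  haveI := hfl
  have hinj : Function.Injective (LinearMap.lTensor ↥(resA f) (jmap f P)) :=
    Function.LeftInverse.injective (g := contr f P) (contr_jmap f P)
  have hex : Function.Exact (0 : PUnit.{u+1} →ₗ[B] P) (jmap f P) := by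
    apply Module.FaithfullyFlat.lTensor_reflects_exact B ↥(resA f)
    rw [LinearMap.exact_iff, LinearMap.lTensor_zero, LinearMap.range_zero,
      LinearMap.ker_eq_bot]
    exact hinj
  rw [← LinearMap.ker_eq_bot, LinearMap.exact_iff.mp hex, LinearMap.range_zero]

theorem amitsur (hfl : Module.FaithfullyFlat B ↥(resA f)) (x : ↥(resA f) ⊗[B] P)
    (hx : LinearMap.lTensor ↥(resA f) (jmap f P) x = jmap f (↥(resA f) ⊗[B] P) x) :
    ∃ p : P, x = jmap f P p := by
  haveI := hfl
  have hex : Function.Exact (jmap f P) (hAmitsur f P) := by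
    apply Module.FaithfullyFlat.lTensor_reflects_exact B ↥(resA f)
    rw [LinearMap.exact_iff]
    apply le_antisymm
    · rintro y hy
      rw [LinearMap.mem_ker] at hy
      have hh := contr_hAmitsur f P y
      rw [hy, map_zero] at hh
      exact ⟨contr f P y, sub_eq_zero.mp hh.symm⟩
    · rintro _ ⟨w, rfl⟩
      rw [LinearMap.mem_ker, ← LinearMap.comp_apply, ← LinearMap.lTensor_comp,
        hAmitsur_comp_jmap, LinearMap.lTensor_zero, LinearMap.zero_apply]
  have : hAmitsur f P x = 0 := by
    rw [hAmitsur, LinearMap.sub_apply, hx, sub_self]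
  obtain ⟨p, hp⟩ := (hex x).mp this
  exact ⟨p, hp.symm⟩

end Amitsur

/-! ### Essential surjectivity -/

section EssSurjSection

variable (D : DescentDatum f)

/-- The map `m ↦ θ (m ⊗ 1)`. -/
def eps : ↥(res f D.M) →ₗ[B] ↥(resA f) ⊗[B] ↥(res f D.M) :=
  D.θ ∘ₗ tmulOne f D.M

lemma eps_apply (m : ↥(res f D.M)) : eps f D m = D.θ (m ⊗ₜ[B] ofA f 1) := rfl

lemma unitMap_eps (m : ↥(res f D.M)) : unitMap f D.M (eps f D m) = m := D.unit m

lemma eps_injective : Function.Injective (eps f D) :=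
  Function.LeftInverse.injective (g := unitMap f D.M) (fun m => unitMap_eps f D m)

lemma eps_smul (a : A) (m : ↥(res f D.M)) :
    eps f D (smulHom f D.M a m) = actR f D.M a 1 (eps f D m) := by
  have h1 : D.θ (smulHom f D.M a m ⊗ₜ[B] ofA f (1 * 1)) =
      actR f D.M a 1 (D.θ (m ⊗ₜ[B] ofA f 1)) := D.compat a 1 (m ⊗ₜ[B] ofA f 1)
  rw [one_mul] at h1
  exact h1

lemma contr_actR (a : A) (y : ↥(resA f) ⊗[B] ↥(res f D.M)) :
    contr f ↥(res f D.M) (ofA f a ⊗ₜ[B] y) = actR f D.M a 1 y := by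
  induction y using TensorProduct.induction_on with
  | zero => simp only [tmul_zero, map_zero]
  | tmul c m =>
      have h1 : contr f ↥(res f D.M) (ofA f a ⊗ₜ[B] (ofA f (toA f c) ⊗ₜ[B] m)) =
          ofA f (a * toA f c) ⊗ₜ[B] m := contr_tmul f _ a (toA f c) m
      have h2 : actR f D.M a 1 (c ⊗ₜ[B] m) =
          ofA f (a * toA f c) ⊗ₜ[B] (smulHom f D.M 1 m) := rfl
      rw [h2, show smulHom f D.M 1 m = m from one_smul A (m : ↥D.M)]
      exact h1
  | add y₁ y₂ h₁ h₂ =>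
      rw [tmul_add]
      simp only [map_add, h₁, h₂]

lemma contr_lTensor_eps (x : ↥(resA f) ⊗[B] ↥(res f D.M)) :
    contr f ↥(res f D.M) (LinearMap.lTensor ↥(resA f) (eps f D) x) =
      eps f D (unitMap f D.M x) := by
  induction x using TensorProduct.induction_on with
  | zero => simp only [map_zero]
  | tmul a m =>
      rw [LinearMap.lTensor_tmul]
      have h1 : contr f ↥(res f D.M) (ofA f (toA f a) ⊗ₜ[B] eps f D m) =
          actR f D.M (toA f a) 1 (eps f D m) := contr_actR f D (toA f a) _
      rw [show (a ⊗ₜ[B] eps f D m : ↥(resA f) ⊗[B] _) =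
        ofA f (toA f a) ⊗ₜ[B] eps f D m from rfl, h1, ← eps_smul]
      rfl
  | add x₁ x₂ h₁ h₂ =>
      simp only [map_add, h₁, h₂]

/-- The submodule of descended elements. -/
def desc : Submodule B ↥(res f D.M) :=
  LinearMap.ker (eps f D - jmap f ↥(res f D.M))

lemma mem_desc {m : ↥(res f D.M)} :
    m ∈ desc f D ↔ eps f D m = jmap f ↥(res f D.M) m := by
  rw [desc, LinearMap.mem_ker, LinearMap.sub_apply, sub_eq_zero]

/-- The descended module as an object of `ModuleCat B`. -/
def descMod : ModuleCat.{u} B := ModuleCat.of B ↥(desc f D)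

/-- The comparison map `A ⊗[B] desc → M`, `a ⊗ n ↦ a • n`, as a `B`-linear map. -/
def sigma0 : ↥(resA f) ⊗[B] ↥(descMod f D) →ₗ[B] ↥(res f D.M) :=
  TensorProduct.lift
    ((LinearMap.lcomp B ↥(res f D.M) (desc f D).subtype) ∘ₗ ev f D.M)

lemma sigma0_tmul (a : ↥(resA f)) (n : ↥(descMod f D)) :
    sigma0 f D (a ⊗ₜ[B] n) = smulHom f D.M (toA f a) (n.1 : ↥(res f D.M)) := rfl

lemma eps_sigma0 (w : ↥(resA f) ⊗[B] ↥(descMod f D)) :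
    eps f D (sigma0 f D w) =
      LinearMap.lTensor ↥(resA f) (desc f D).subtype w := by
  induction w using TensorProduct.induction_on with
  | zero => simp only [map_zero]; exact (map_zero _).symm
  | tmul a n =>
      rw [sigma0_tmul, eps_smul,
        show eps f D (n.1 : ↥(res f D.M)) = jmap f ↥(res f D.M) (n.1 : ↥(res f D.M))
          from (mem_desc f D).mp n.2, jmap_apply]
      have h2 : actR f D.M (toA f a) 1
          (ofA f 1 ⊗ₜ[B] (n.1 : ↥(res f D.M))) =
            ofA f (toA f a * 1) ⊗ₜ[B] (smulHom f D.M 1 (n.1 : ↥(res f D.M))) := rfl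
      rw [h2, mul_one, show smulHom f D.M 1 (n.1 : ↥(res f D.M)) = (n.1 : ↥(res f D.M))
        from one_smul A ((n.1 : ↥D.M))]
      rfl
  | add w₁ w₂ h₁ h₂ =>
      simp only [map_add, h₁, h₂]; exact (map_add _ _ _).symm

lemma exists_preimage (hfl : Module.Flat B ↥(resA f)) (x : ↥(resA f) ⊗[B] ↥(res f D.M))
    (hx : LinearMap.lTensor ↥(resA f) (eps f D) x =
      LinearMap.lTensor ↥(resA f) (jmap f ↥(res f D.M)) x) :
    ∃ w, LinearMap.lTensor ↥(resA f) (desc f D).subtype w = x := by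
  haveI := hfl
  have hex := Module.Flat.lTensor_exact (M := ↥(resA f))
    (LinearMap.exact_subtype_ker_map (eps f D - jmap f ↥(res f D.M)))
  have h0 : LinearMap.lTensor ↥(resA f) (eps f D - jmap f ↥(res f D.M)) x = 0 := by
    rw [LinearMap.lTensor_sub, LinearMap.sub_apply, hx, sub_self]
  obtain ⟨w, hw⟩ := (hex x).mp h0
  exact ⟨w, hw⟩

lemma lTensor_eps_eps (m : ↥(res f D.M)) :
    LinearMap.lTensor ↥(resA f) (eps f D) (eps f D m) =
      LinearMap.lTensor ↥(resA f) (jmap f ↥(res f D.M)) (eps f D m) := by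
  have hc := LinearMap.congr_fun D.cocycle ((m ⊗ₜ[B] ofA f 1) ⊗ₜ[B] ofA f 1)
  have hswap : swapMAA f D.M ((m ⊗ₜ[B] ofA f 1) ⊗ₜ[B] ofA f 1) =
      (m ⊗ₜ[B] ofA f 1) ⊗ₜ[B] ofA f 1 := rfl
  have hstep3 : ∀ y : ↥(resA f) ⊗[B] ↥(res f D.M),
      (TensorProduct.assoc B ↥(resA f) ↥(resA f) ↥(res f D.M))
          (swapAMA f D.M (y ⊗ₜ[B] ofA f 1)) =
        LinearMap.lTensor ↥(resA f) (jmap f ↥(res f D.M)) y := by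
    intro y
    induction y using TensorProduct.induction_on with
    | zero => simp only [zero_tmul, map_zero]
    | tmul c m' => rfl
    | add y₁ y₂ h₁ h₂ =>
        rw [add_tmul]
        simp only [map_add, h₁, h₂]
  have hstep4 : ∀ y : ↥(resA f) ⊗[B] ↥(res f D.M),
      LinearMap.lTensor ↥(resA f) D.θ
          ((TensorProduct.assoc B ↥(resA f) ↥(res f D.M) ↥(resA f))
            (y ⊗ₜ[B] ofA f 1)) =
        LinearMap.lTensor ↥(resA f) (eps f D) y := by
    intro y
    induction y using TensorProduct.induction_on with
    | zero => simp only [zero_tmul, map_zero]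
    | tmul c m' => rfl
    | add y₁ y₂ h₁ h₂ =>
        rw [add_tmul]
        simp only [map_add, h₁, h₂]
  simp only [LinearMap.comp_apply, LinearEquiv.coe_coe] at hc
  rw [hswap] at hc
  rw [show LinearMap.rTensor ↥(resA f) D.θ ((m ⊗ₜ[B] ofA f 1) ⊗ₜ[B] ofA f 1) =
    (eps f D m) ⊗ₜ[B] ofA f 1 from rfl] at hc
  rw [hstep3 (eps f D m), hstep4 (eps f D m)] at hc
  exact hc.symm

lemma sigma0_bijective (hfl : Module.Flat B ↥(resA f)) :
    Function.Bijective (sigma0 f D) := by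
  haveI := hfl
  constructor
  · intro x y hxy
    have h := congrArg (eps f D) hxy
    rw [eps_sigma0, eps_sigma0] at h
    exact Module.Flat.lTensor_preserves_injective_linearMap (desc f D).subtype
      (Submodule.injective_subtype _) h
  · intro m
    obtain ⟨w, hw⟩ := exists_preimage f D hfl (eps f D m) (lTensor_eps_eps f D m)
    refine ⟨w, eps_injective f D ?_⟩
    rw [eps_sigma0 f D w, hw]

/-- The comparison map as an `A`-linear map. -/
def sigmaHom : (ModuleCat.extendScalars.{u} f).obj (descMod f D) ⟶ D.M :=
  ModuleCat.ofHom (X := ↥((ModuleCat.extendScalars.{u} f).obj (descMod f D))) (Y := ↥D.M)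
  { toFun := sigma0 f D
    map_add' := (sigma0 f D).map_add
    map_smul' a z := by
      rw [RingHom.id_apply]
      induction z using TensorProduct.induction_on with
      | zero =>
          show sigma0 f D (a • (0 : ↥((ModuleCat.extendScalars.{u} f).obj (descMod f D)))) = a • sigma0 f D 0
          erw [smul_zero, map_zero, smul_zero]
      | tmul c n =>
          show sigma0 f D (ofA f (a * toA f c) ⊗ₜ[B] n) = a • sigma0 f D (c ⊗ₜ[B] n)
          rw [sigma0_tmul, sigma0_tmul]
          show (a * toA f c) • ((n.1 : ↥D.M)) = a • (toA f c • ((n.1 : ↥D.M)))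
          rw [mul_smul]
      | add z₁ z₂ h₁ h₂ =>
          show sigma0 f D (a • ((show ↥((ModuleCat.extendScalars.{u} f).obj (descMod f D)) from z₁) + (show ↥((ModuleCat.extendScalars.{u} f).obj (descMod f D)) from z₂))) =
            a • sigma0 f D (z₁ + z₂)
          erw [smul_add, map_add, map_add, smul_add]
          exact congrArg₂ (· + ·) h₁ h₂ }

/-- The comparison map as a morphism of descent data. -/
def sigmaBar : Fobj f (descMod f D) ⟶ D :=
  ⟨sigmaHom f D, by
    apply LinearMap.ext
    intro z
    induction z using TensorProduct.induction_on with
    | zero => simp only [map_zero]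
    | tmul w x =>
        induction w using TensorProduct.induction_on with
        | zero => erw [zero_tmul]; simp only [zero_tmul, map_zero]
        | tmul a n =>
            show LinearMap.lTensor ↥(resA f)
                ((ModuleCat.restrictScalars f).map (sigmaHom f D)).hom
                (thetaN f (descMod f D)
                  (toX f (descMod f D) (ofA f (toA f a) ⊗ₜ[B] n) ⊗ₜ[B] ofA f (toA f x))) =
              D.θ (smulHom f D.M (toA f a) (n.1 : ↥(res f D.M)) ⊗ₜ[B] ofA f (toA f x))
            rw [thetaN_tmul]
            have h1 : LinearMap.lTensor ↥(resA f)
                ((ModuleCat.restrictScalars f).map (sigmaHom f D)).hom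
                (ofA f (toA f a) ⊗ₜ[B] toX f (descMod f D) (ofA f (toA f x) ⊗ₜ[B] n)) =
                  ofA f (toA f a) ⊗ₜ[B]
                    (smulHom f D.M (toA f x) (n.1 : ↥(res f D.M))) := rfl
            rw [h1]
            have h2 : D.θ (smulHom f D.M (toA f a) (n.1 : ↥(res f D.M))
                ⊗ₜ[B] ofA f (toA f x * 1)) =
                  actR f D.M (toA f a) (toA f x)
                    (D.θ ((n.1 : ↥(res f D.M)) ⊗ₜ[B] ofA f 1)) :=
              D.compat (toA f a) (toA f x) ((n.1 : ↥(res f D.M)) ⊗ₜ[B] ofA f 1)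
            rw [mul_one] at h2
            rw [h2, show D.θ ((n.1 : ↥(res f D.M)) ⊗ₜ[B] ofA f 1) =
              eps f D (n.1 : ↥(res f D.M)) from rfl,
              show eps f D (n.1 : ↥(res f D.M)) =
                jmap f ↥(res f D.M) (n.1 : ↥(res f D.M)) from (mem_desc f D).mp n.2,
              jmap_apply]
            have h3 : actR f D.M (toA f a) (toA f x)
                (ofA f 1 ⊗ₜ[B] (n.1 : ↥(res f D.M))) =
                  ofA f (toA f a * 1) ⊗ₜ[B]
                    (smulHom f D.M (toA f x) (n.1 : ↥(res f D.M))) := rfl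
            rw [h3, mul_one]
        | add w₁ w₂ h₁ h₂ =>
            simp only [LinearMap.comp_apply] at h₁ h₂ ⊢
            erw [add_tmul (M := ↥(res f (Fobj f (descMod f D)).M)) w₁ w₂ x]
            simp only [map_add, h₁, h₂]
    | add z₁ z₂ h₁ h₂ =>
        simp only [LinearMap.comp_apply] at h₁ h₂ ⊢
        simp only [map_add, h₁, h₂]⟩

/-- A morphism of descent data whose underlying module map is an isomorphism is an
isomorphism. -/
theorem isIso_of_isIso {D₁ D₂ : DescentDatum f} (φ : D₁ ⟶ D₂) (hiso : IsIso φ.1) :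
    IsIso φ := by
  obtain ⟨ψ, h1, h2⟩ := hiso
  have hφψ : ∀ m : ↥(res f D₂.M), ((ModuleCat.restrictScalars f).map φ.1).hom
      (((ModuleCat.restrictScalars f).map ψ).hom m) = m := fun m => LinearMap.congr_fun (congrArg ModuleCat.Hom.hom h2) m
  have hψφ : ∀ m : ↥(res f D₁.M), ((ModuleCat.restrictScalars f).map ψ).hom
      (((ModuleCat.restrictScalars f).map φ.1).hom m) = m := fun m => LinearMap.congr_fun (congrArg ModuleCat.Hom.hom h1) m
  have hφψ' : ((ModuleCat.restrictScalars f).map φ.1).hom ∘ₗ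
      ((ModuleCat.restrictScalars f).map ψ).hom = LinearMap.id := LinearMap.ext hφψ
  have hψφ' : ((ModuleCat.restrictScalars f).map ψ).hom ∘ₗ
      ((ModuleCat.restrictScalars f).map φ.1).hom = LinearMap.id := LinearMap.ext hψφ
  have key : LinearMap.lTensor ↥(resA f) ((ModuleCat.restrictScalars f).map ψ).hom ∘ₗ D₂.θ =
      D₁.θ ∘ₗ LinearMap.rTensor ↥(resA f) ((ModuleCat.restrictScalars f).map ψ).hom := by
    apply LinearMap.ext
    intro z
    have hz : LinearMap.rTensor ↥(resA f) ((ModuleCat.restrictScalars f).map φ.1).hom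
        (LinearMap.rTensor ↥(resA f) ((ModuleCat.restrictScalars f).map ψ).hom z) = z := by
      rw [← LinearMap.comp_apply, ← LinearMap.rTensor_comp, hφψ',
        LinearMap.rTensor_id, LinearMap.id_apply]
    have hφ2 := LinearMap.congr_fun φ.2
      (LinearMap.rTensor ↥(resA f) ((ModuleCat.restrictScalars f).map ψ).hom z)
    simp only [LinearMap.comp_apply] at hφ2
    rw [hz] at hφ2
    simp only [LinearMap.comp_apply]
    rw [← hφ2, ← LinearMap.comp_apply, ← LinearMap.lTensor_comp, hψφ',
      LinearMap.lTensor_id, LinearMap.id_apply]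
  exact ⟨(⟨ψ, key⟩ : D₂ ⟶ D₁), Subtype.ext h1, Subtype.ext h2⟩

theorem F_essSurj (hfl : Module.Flat B ↥(resA f)) : (F f).EssSurj := by
  constructor
  intro D
  refine ⟨descMod f D, ⟨?_⟩⟩
  have hbij : Function.Bijective (sigmaHom f D) := sigma0_bijective f D hfl
  have hiso : IsIso (sigmaBar f D).1 := by
    let e := LinearEquiv.ofBijective
      (sigmaBar f D).1.hom
      hbij
    exact ⟨ModuleCat.ofHom (X := ↥D.M) (Y := ↥((ModuleCat.extendScalars.{u} f).obj (descMod f D))) e.symm.toLinearMap,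
      ModuleCat.hom_ext (LinearMap.ext fun x => e.symm_apply_apply x),
      ModuleCat.hom_ext (LinearMap.ext fun x => e.apply_symm_apply x)⟩
  have : IsIso (sigmaBar f D) := isIso_of_isIso f (sigmaBar f D) hiso
  exact @asIso _ _ _ _ (sigmaBar f D) this

end EssSurjSection

/-! ### Full and faithful -/

lemma toX_add (N : ModuleCat.{u} B) (w₁ w₂ : ↥(resA f) ⊗[B] ↥N) :
    toX f N (w₁ + w₂) = toX f N w₁ + toX f N w₂ := rfl

lemma toX_injective (N : ModuleCat.{u} B) : Function.Injective (toX f N) :=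
  fun _ _ h => h

lemma toX_smul (N : ModuleCat.{u} B) (b : B) (w : ↥(resA f) ⊗[B] ↥N) :
    toX f N (b • w) = b • toX f N w :=
  (rsEquiv f N).symm.map_smul b w

lemma thetaN_tmulOne (N : ModuleCat.{u} B) (w : ↥(resA f) ⊗[B] ↥N) :
    LinearMap.lTensor ↥(resA f) (rsEquiv f N).toLinearMap
        (thetaN f N (toX f N w ⊗ₜ[B] ofA f 1)) =
      LinearMap.lTensor ↥(resA f) (jmap f ↥N) w := by
  induction w using TensorProduct.induction_on with
  | zero => simp only [map_zero]; rfl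
  | tmul a n => rfl
  | add w₁ w₂ h₁ h₂ =>
      rw [toX_add, add_tmul]
      simp only [map_add, h₁, h₂]

theorem F_faithful (hff : Module.FaithfullyFlat B ↥(resA f)) : (F f).Faithful := by
  constructor
  intro N N' g g' h
  have h1 : (ModuleCat.extendScalars.{u} f).map g =
      (ModuleCat.extendScalars.{u} f).map g' := congrArg Subtype.val h
  apply ModuleCat.hom_ext
  apply LinearMap.ext
  intro n
  apply jmap_injective f ↥N' hff
  have h2 := LinearMap.congr_fun (congrArg ModuleCat.Hom.hom h1) (toX f N (jmap f ↥N n))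
  exact h2

theorem F_full (hff : Module.FaithfullyFlat B ↥(resA f)) : (F f).Full := by
  constructor
  intro N N' φ
  have hx : ∀ n : ↥N, ∃ p : ↥N',
      rsEquiv f N' (((ModuleCat.restrictScalars f).map φ.1)
        (toX f N (jmap f ↥N n))) = jmap f ↥N' p := by
    intro n
    have hrel : LinearMap.lTensor ↥(resA f) ((ModuleCat.restrictScalars f).map φ.1).hom
        (thetaN f N (toX f N (jmap f ↥N n) ⊗ₜ[B] ofA f 1)) =
          thetaN f N' ((((ModuleCat.restrictScalars f).map φ.1)
            (toX f N (jmap f ↥N n))) ⊗ₜ[B] ofA f 1) :=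
      LinearMap.congr_fun φ.2 (toX f N (jmap f ↥N n) ⊗ₜ[B] ofA f 1)
    have hG := congrArg (LinearMap.lTensor ↥(resA f) (rsEquiv f N').toLinearMap) hrel
    have hT : LinearMap.lTensor ↥(resA f) (rsEquiv f N').toLinearMap
        (thetaN f N' ((((ModuleCat.restrictScalars f).map φ.1)
          (toX f N (jmap f ↥N n))) ⊗ₜ[B] ofA f 1)) =
        LinearMap.lTensor ↥(resA f) (jmap f ↥N')
          (rsEquiv f N' (((ModuleCat.restrictScalars f).map φ.1)
            (toX f N (jmap f ↥N n)))) :=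
      thetaN_tmulOne f N' (rsEquiv f N' (((ModuleCat.restrictScalars f).map φ.1)
        (toX f N (jmap f ↥N n))))
    have hL : LinearMap.lTensor ↥(resA f) (rsEquiv f N').toLinearMap
        (LinearMap.lTensor ↥(resA f) ((ModuleCat.restrictScalars f).map φ.1).hom
          (thetaN f N (toX f N (jmap f ↥N n) ⊗ₜ[B] ofA f 1))) =
        jmap f (↥(resA f) ⊗[B] ↥N')
          (rsEquiv f N' (((ModuleCat.restrictScalars f).map φ.1)
            (toX f N (jmap f ↥N n)))) := rfl
    rw [hT, hL] at hG
    obtain ⟨p, hp⟩ := amitsur f ↥N' hff _ hG.symm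
    exact ⟨p, hp⟩
  choose g hg using hx
  have hjinj := jmap_injective f ↥N' hff
  have hfun : ∀ n : ↥N, ((ModuleCat.restrictScalars f).map φ.1)
      (toX f N (jmap f ↥N n)) = toX f N' (jmap f ↥N' (g n)) := by
    intro n
    apply (rsEquiv f N').injective
    rw [hg n]
    rfl
  have hadd : ∀ n m : ↥N, g (n + m) = g n + g m := by
    intro n m
    apply hjinj
    apply toX_injective f N'
    have e1 : toX f N (jmap f ↥N (n + m)) =
        toX f N (jmap f ↥N n) + toX f N (jmap f ↥N m) := by
      rw [map_add]; rfl
    have h3 := hfun (n + m)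
    erw [e1, map_add, hfun n, hfun m] at h3
    rw [← h3, map_add]
    rfl
  have hsmul : ∀ (b : B) (n : ↥N), g (b • n) = b • g n := by
    intro b n
    apply hjinj
    apply toX_injective f N'
    have h3 := hfun (b • n)
    erw [show jmap f ↥N (b • n) = b • jmap f ↥N n from map_smul _ b n,
      toX_smul, map_smul] at h3
    rw [← h3, hfun n]; erw [← toX_smul, ← map_smul]
  let glin : N ⟶ N' := ModuleCat.ofHom
    { toFun := g
      map_add' := hadd
      map_smul' := fun b n => by rw [RingHom.id_apply]; exact hsmul b n }
  refine ⟨glin, ?_⟩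
  apply Subtype.ext
  apply ModuleCat.hom_ext
  apply LinearMap.ext
  intro z
  induction z using TensorProduct.induction_on with
  | zero => exact (map_zero _).trans (map_zero _).symm
  | tmul a n =>
      have e : (a ⊗ₜ[B] n : ↥((ModuleCat.extendScalars.{u} f).obj N)) =
          toA f a • toX f N (jmap f ↥N n) := by
        show (a ⊗ₜ[B] n : ↥((ModuleCat.extendScalars.{u} f).obj N)) =
          ofA f (toA f a * 1) ⊗ₜ[B] n
        rw [mul_one]
        rfl
      calc ((F f).map glin).1 (a ⊗ₜ[B] n)
          = toA f a • (((F f).map glin).1 (toX f N (jmap f ↥N n))) := by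
            rw [e]; erw [map_smul]
        _ = toA f a • (((F f).map glin).1 (toX f N (jmap f ↥N n))) := rfl
        _ = toA f a • (φ.1 (toX f N (jmap f ↥N n))) :=
            congrArg (fun y => toA f a • y) (hfun n).symm
        _ = φ.1 (a ⊗ₜ[B] n) := by rw [e]; erw [map_smul]
  | add z₁ z₂ h₁ h₂ =>
      erw [map_add, map_add, h₁, h₂]

/-- **Faithfully flat descent for modules.**  If `f : B → A` is a faithfully flat
homomorphism of commutative rings, the functor sending a `B`-module `N` to the descent
datum `(A ⊗[B] N, θ_N)`, where `θ_N` is the isomorphism determined by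
`(a ⊗ n) ⊗ a' ↦ a ⊗ (a' ⊗ n)`, and sending a `B`-linear map `g` to `id_A ⊗ g`, is an
equivalence from `ModuleCat B` to the category of descent data for `f`. -/
theorem moduleCat_equiv_descentData
    (hff : letI := f.toAlgebra; Module.FaithfullyFlat B A) :
    ∃ (F : ModuleCat.{u} B ⥤ DescentDatum f)
      (hobj : ∀ N : ModuleCat.{u} B, (F.obj N).M = (ModuleCat.extendScalars.{u} f).obj N),
      F.IsEquivalence ∧
        (∀ N : ModuleCat.{u} B, HEq (F.obj N).θ (thetaN f N)) ∧
        (∀ (N N' : ModuleCat.{u} B) (g : N ⟶ N'),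
          eqToHom (hobj N).symm ≫ (F.map g).1 ≫ eqToHom (hobj N') =
            (ModuleCat.extendScalars.{u} f).map g) := by
  have hffA : Module.FaithfullyFlat B ↥(resA f) := hff
  refine ⟨F f, fun N => rfl, ?_, fun N => HEq.rfl, fun N N' g => ?_⟩
  · exact ⟨F_faithful f hffA, F_full f hffA, F_essSurj f hffA.toFlat⟩
  · rfl

end

end ModuleDescent
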